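/- arXiv:1701.00208 — 2 statements merged into one kernel-verified Lean document; each statement's English description precedes it below -/
import Mathlib

section
/- If 𝒯' is the least generating set of an E-closed family 𝒯 and A, B ⊆ 𝒯', then Cl_E(A) ⊆ Cl_E(B) if and only if A ⊆ B. -/
open Set

variable {σ : Type*}

/-- For a family 𝒯 of theories (sets of sentences) and a sentence φ,
`Tphi 𝒯 φ` is the set 𝒯_φ = {T ∈ 𝒯 | φ ∈ T}. -/
def Tphi (𝒯 : Set (Set σ)) (φ : σ) : Set (Set σ) := {T ∈ 𝒯 | φ ∈ T}

/-- E-closure relative to the ambient set `S` of all complete theories: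
`ClE S 𝒯 = 𝒯 ∪ {T ∈ S | ∀ φ ∈ T, 𝒯_φ is infinite}`. -/
def ClE (S 𝒯 : Set (Set σ)) : Set (Set σ) :=
  𝒯 ∪ {T ∈ S | ∀ φ ∈ T, (Tphi 𝒯 φ).Infinite}

/-- 𝒯 is E-closed if it equals its own E-closure. -/
def EClosed (S 𝒯 : Set (Set σ)) : Prop := ClE S 𝒯 = 𝒯

/-- `𝒯'` is a generating set for `𝒯`. -/
def Generates (S 𝒯' 𝒯 : Set (Set σ)) : Prop := 𝒯' ⊆ 𝒯 ∧ ClE S 𝒯' = 𝒯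

/-- `𝒯'` is the least generating set for `𝒯`. -/
def IsLeastGen (S 𝒯' 𝒯 : Set (Set σ)) : Prop :=
  Generates S 𝒯' 𝒯 ∧ ∀ 𝒯'', Generates S 𝒯'' 𝒯 → 𝒯' ⊆ 𝒯''

/-- `T` is an isolated point of `𝒯`: some sentence φ ∈ T has 𝒯_φ = {T}. -/
def IsolatedIn (𝒯 : Set (Set σ)) (T : Set σ) : Prop := ∃ φ ∈ T, Tphi 𝒯 φ = {T}

/-- The meet operation ∧′: E-closure of the set of isolated points of 𝒯₁ ∩ 𝒯₂. -/
def meetI (S 𝒯₁ 𝒯₂ : Set (Set σ)) : Set (Set σ) :=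
  ClE S {T ∈ 𝒯₁ ∩ 𝒯₂ | IsolatedIn (𝒯₁ ∩ 𝒯₂) T}

/-!
A member `T` of the least generating set `𝒯'` contains a sentence `φ` with `𝒯'_φ` finite: otherwise
every `𝒯'_φ` with `φ ∈ T` stays infinite after removing `T`, so `T` lies in `Cl_E(𝒯' \ {T})`, and
`𝒯' \ {T}` would be a smaller generating set. Hence if `T ∈ A` lies in `Cl_E(B)` with `B ⊆ 𝒯'`, it
cannot come from the second part of the closure (`B_φ ⊆ 𝒯'_φ` is finite), so `T ∈ B`.
-/

lemma tphi_mono {X Y : Set (Set σ)} (h : X ⊆ Y) (φ : σ) : Tphi X φ ⊆ Tphi Y φ :=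
  fun _ hT => ⟨h hT.1, hT.2⟩

lemma tphi_diff_singleton (X : Set (Set σ)) (T : Set σ) (φ : σ) :
    Tphi (X \ {T}) φ = Tphi X φ \ {T} := by
  ext U
  simp only [Tphi, mem_sdiff, mem_ofPred_eq, mem_singleton_iff]
  tauto

lemma clE_mono (S : Set (Set σ)) {A B : Set (Set σ)} (h : A ⊆ B) : ClE S A ⊆ ClE S B :=
  union_subset_union h fun _ hT => ⟨hT.1, fun φ hφ => (hT.2 φ hφ).mono (tphi_mono h φ)⟩

lemma mem_clE_diff_singleton {S X : Set (Set σ)} {U : Set σ} (hUS : U ∈ S)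
    (hinf : ∀ φ ∈ U, (Tphi X φ).Infinite) (T : Set σ) : U ∈ ClE S (X \ {T}) := by
  refine Or.inr ⟨hUS, fun φ hφ => ?_⟩
  rw [tphi_diff_singleton]
  exact (hinf φ hφ).sdiff (finite_singleton T)

lemma clE_diff_singleton_eq {S X : Set (Set σ)} {T : Set σ} (hT : T ∈ ClE S (X \ {T})) :
    ClE S (X \ {T}) = ClE S X := by
  refine (clE_mono S sdiff_subset).antisymm fun U hU => ?_
  rcases hU with hUX | ⟨hUS, hinf⟩
  · by_cases hUT : U = T
    · exact hUT ▸ hT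
    · exact Or.inl ⟨hUX, hUT⟩
  · exact mem_clE_diff_singleton hUS hinf T

lemma IsLeastGen.exists_finite_tphi {S 𝒯' 𝒯 : Set (Set σ)} (hg : IsLeastGen S 𝒯' 𝒯)
    (h𝒯S : 𝒯 ⊆ S) {T : Set σ} (hT : T ∈ 𝒯') : ∃ φ ∈ T, (Tphi 𝒯' φ).Finite := by
  by_contra! hinf
  have hgen : Generates S (𝒯' \ {T}) 𝒯 :=
    ⟨sdiff_subset.trans hg.1.1,
      (clE_diff_singleton_eq (mem_clE_diff_singleton (h𝒯S (hg.1.1 hT)) hinf T)).trans hg.1.2⟩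
  exact (hg.2 _ hgen hT).2 rfl

lemma subset_of_clE_subset_clE {S A B : Set (Set σ)}
    (hfin : ∀ T ∈ A, ∃ φ ∈ T, (Tphi B φ).Finite) (h : ClE S A ⊆ ClE S B) : A ⊆ B := by
  intro T hT
  rcases h (Or.inl hT) with hTB | ⟨_, hinf⟩
  · exact hTB
  · obtain ⟨φ, hφ, hφfin⟩ := hfin T hT
    exact absurd hφfin (hinf φ hφ)

theorem clE_subset_iff_general {σ : Type*} (S 𝒯 𝒯' : Set (Set σ))
    (h𝒯S : 𝒯 ⊆ S)
    (hg : IsLeastGen S 𝒯' 𝒯)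
    (A B : Set (Set σ)) (hA : A ⊆ 𝒯') (hB : B ⊆ 𝒯') :
    ClE S A ⊆ ClE S B ↔ A ⊆ B := by
  refine ⟨subset_of_clE_subset_clE fun T hT => ?_, clE_mono S⟩
  obtain ⟨φ, hφ, hfin⟩ := hg.exists_finite_tphi h𝒯S (hA hT)
  exact ⟨φ, hφ, hfin.subset (tphi_mono hB φ)⟩

/-- For subsets A, B of the least generating set 𝒯' of an E-closed 𝒯,
Cl_E(A) ⊆ Cl_E(B) iff A ⊆ B. -/
theorem clE_subset_iff {σ : Type*} (S 𝒯 𝒯' : Set (Set σ))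
    (hS : ∀ T ∈ S, T.Nonempty) (h𝒯S : 𝒯 ⊆ S)
    (hcl : EClosed S 𝒯) (hg : IsLeastGen S 𝒯' 𝒯)
    (A B : Set (Set σ)) (hA : A ⊆ 𝒯') (hB : B ⊆ 𝒯') :
    ClE S A ⊆ ClE S B ↔ A ⊆ B :=
  clE_subset_iff_general S 𝒯 𝒯' h𝒯S hg A B hA hB
end

section
/- Suppose 𝒯₁ ⊆ 𝒯₂ are E-closed families with least generating sets 𝒯'₁ and 𝒯'₂, and suppose 𝒯'₂ \ 𝒯'₁ is finite. Then 𝒯₂ = 𝒯₁ ∪ (𝒯'₂ \ 𝒯'₁). -/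
open Set

variable {σ : Type*}

section EClosure

variable {S 𝒯 𝒰 : Set (Set σ)}

theorem Tphi_union (𝒯 𝒰 : Set (Set σ)) (φ : σ) :
    Tphi (𝒯 ∪ 𝒰) φ = Tphi 𝒯 φ ∪ Tphi 𝒰 φ :=
  sep_union

theorem Tphi_mono (h : 𝒯 ⊆ 𝒰) (φ : σ) : Tphi 𝒯 φ ⊆ Tphi 𝒰 φ :=
  fun _ ⟨hT, hφ⟩ ↦ ⟨h hT, hφ⟩

theorem subset_ClE : 𝒯 ⊆ ClE S 𝒯 :=
  subset_union_left

theorem ClE_mono (h : 𝒯 ⊆ 𝒰) : ClE S 𝒯 ⊆ ClE S 𝒰 :=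
  union_subset_union h fun _ ⟨hT, hinf⟩ ↦ ⟨hT, fun φ hφ ↦ (hinf φ hφ).mono (Tphi_mono h φ)⟩

/-- A finite set adds only finitely many members to each `Tphi _ φ`, so it creates no new
limit theories. -/
theorem ClE_union_of_finite (h𝒰 : 𝒰.Finite) : ClE S (𝒯 ∪ 𝒰) = ClE S 𝒯 ∪ 𝒰 := by
  refine Subset.antisymm ?_ (union_subset (ClE_mono subset_union_left)
    (subset_union_right.trans subset_ClE))
  rintro T (hT | ⟨hTS, hinf⟩)
  · exact union_subset_union_left _ subset_ClE hT
  · refine Or.inl (Or.inr ⟨hTS, fun φ hφ ↦ ?_⟩)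
    have hunion := hinf φ hφ
    rw [Tphi_union, infinite_union] at hunion
    exact hunion.resolve_right (h𝒰.subset (sep_subset _ _)).not_infinite

end EClosure

theorem finite_difference_union_general {σ : Type*} (S 𝒯₁ 𝒯₂ 𝒯'₁ 𝒯'₂ : Set (Set σ))
    (h₁₂ : 𝒯₁ ⊆ 𝒯₂)
    (hg₁ : IsLeastGen S 𝒯'₁ 𝒯₁) (hg₂ : IsLeastGen S 𝒯'₂ 𝒯₂)
    (hfin : (𝒯'₂ \ 𝒯'₁).Finite) :
    𝒯₂ = 𝒯₁ ∪ (𝒯'₂ \ 𝒯'₁) := by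
  obtain ⟨⟨-, hgen₁⟩, -⟩ := hg₁
  obtain ⟨⟨h'₂, hgen₂⟩, -⟩ := hg₂
  refine Subset.antisymm ?_ (union_subset h₁₂ (sdiff_subset.trans h'₂))
  calc 𝒯₂ = ClE S 𝒯'₂ := hgen₂.symm
    _ ⊆ ClE S (𝒯'₁ ∪ (𝒯'₂ \ 𝒯'₁)) := ClE_mono (union_sdiff_self.symm ▸ subset_union_right)
    _ = 𝒯₁ ∪ (𝒯'₂ \ 𝒯'₁) := by rw [ClE_union_of_finite hfin, hgen₁]

/-- Proposition 2.6: if 𝒯₁ ⊆ 𝒯₂ are E-closed with least generating sets 𝒯'₁, 𝒯'₂ and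
𝒯'₂ \ 𝒯'₁ is finite, then 𝒯₂ = 𝒯₁ ∪ (𝒯'₂ \ 𝒯'₁). -/
theorem finite_difference_union {σ : Type*} (S 𝒯₁ 𝒯₂ 𝒯'₁ 𝒯'₂ : Set (Set σ))
    (hS : ∀ T ∈ S, T.Nonempty) (h₁S : 𝒯₁ ⊆ S) (h₂S : 𝒯₂ ⊆ S)
    (h₁ : EClosed S 𝒯₁) (h₂ : EClosed S 𝒯₂) (h₁₂ : 𝒯₁ ⊆ 𝒯₂)
    (hg₁ : IsLeastGen S 𝒯'₁ 𝒯₁) (hg₂ : IsLeastGen S 𝒯'₂ 𝒯₂)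
    (hfin : (𝒯'₂ \ 𝒯'₁).Finite) :
    𝒯₂ = 𝒯₁ ∪ (𝒯'₂ \ 𝒯'₁) :=
  finite_difference_union_general S 𝒯₁ 𝒯₂ 𝒯'₁ 𝒯'₂ h₁₂ hg₁ hg₂ hfin
end
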